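/- arXiv:1309.4422 — 2 statements merged into one kernel-verified Lean document; each statement's English description precedes it below -/
import Mathlib

section
/- For ν > -1/2, α > |β|, μ ∈ ℝ, the function p(x) = ((α² − β²)^{ν+1/2} / (√π Γ(ν+1/2))) (|x−μ|/(2α))^ν e^{β(x−μ)} K_ν(α|x−μ|) is a probability density function on ℝ, i.e., it is nonnegative and integrates to 1. -/
open MeasureTheory ProbabilityTheory

/-- The modified Bessel function of the second kind, via the standard integral
representation `K_ν(x) = ∫_0^∞ exp(-x cosh t) cosh(ν t) dt` (valid for `x > 0`). -/
noncomputable def besselK (ν x : ℝ) : ℝ :=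
  ∫ t in Set.Ioi (0 : ℝ), Real.exp (-x * Real.cosh t) * Real.cosh (ν * t)

/-- The modified Bessel function of the first kind
`I_ν(x) = ∑_{k≥0} (x/2)^{ν+2k} / (Γ(ν+k+1) k!)`. -/
noncomputable def besselI (ν x : ℝ) : ℝ :=
  ∑' n : ℕ, (x / 2) ^ (ν + 2 * (n : ℝ)) / (Real.Gamma (ν + (n : ℝ) + 1) * (n : ℕ).factorial)

/-- Density of the Variance-Gamma distribution `VG₁(r, θ, σ, μ)`. -/
noncomputable def vg1pdf (r θ σ μ x : ℝ) : ℝ :=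
  1 / (σ * Real.sqrt Real.pi * Real.Gamma (r / 2)) * Real.exp (θ * (x - μ) / σ ^ 2) *
    (|x - μ| / (2 * Real.sqrt (θ ^ 2 + σ ^ 2))) ^ ((r - 1) / 2) *
    besselK ((r - 1) / 2) (Real.sqrt (θ ^ 2 + σ ^ 2) * |x - μ| / σ ^ 2)

/-- The Variance-Gamma distribution `VG₁(r, θ, σ, μ)` as a measure on `ℝ`. -/
noncomputable def vg1measure (r θ σ μ : ℝ) : Measure ℝ :=
  volume.withDensity fun x => ENNReal.ofReal (vg1pdf r θ σ μ x)

/-- Density of the Variance-Gamma distribution `VG₂(ν, α, β, μ)`. -/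
noncomputable def vg2pdf (ν α β μ x : ℝ) : ℝ :=
  (α ^ 2 - β ^ 2) ^ (ν + 1 / 2) / (Real.sqrt Real.pi * Real.Gamma (ν + 1 / 2)) *
    (|x - μ| / (2 * α)) ^ ν * Real.exp (β * (x - μ)) * besselK ν (α * |x - μ|)

/-- The Variance-Gamma distribution `VG₂(ν, α, β, μ)` as a measure on `ℝ`. -/
noncomputable def vg2measure (ν α β μ : ℝ) : Measure ℝ :=
  volume.withDensity fun x => ENNReal.ofReal (vg2pdf ν α β μ x)

/-!
`VG₂(ν, α, β, μ)` is a normal variance-mean mixture: if `S ∼ Γ(ν + 1/2, (α² - β²)/2)` and,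
given `S`, `X ∼ N(μ + βS, S)`, then `X` has density `vg2pdf ν α β μ`. Integrating `S` out of the
joint density leaves, for `x ≠ μ`, a generalised inverse Gaussian integral
`∫₀^∞ s^(ν-1) exp(-(z/2)(s/c + c/s)) ds` with `c = |x - μ|/α`, `z = α|x - μ|`; the substitution
`s = c eᵘ` turns it into `c^ν ∫ exp(νu - z cosh u) du = 2 c^ν K_ν(z)`. By Tonelli the total mass
is that of the joint density, which is `1` because the Gaussian and gamma densities have mass `1`.
-/

open scoped ENNReal
open Real Set

lemma sq_div_four_le_cosh (x : ℝ) : x ^ 2 / 4 ≤ cosh x := by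
  rw [← cosh_abs, cosh_eq]
  nlinarith [quadratic_le_exp_of_nonneg (abs_nonneg x), exp_pos (-|x|), sq_abs x, abs_nonneg x]

lemma integrable_exp_mul_sub_mul_cosh {z : ℝ} (hz : 0 < z) (d : ℝ) :
    Integrable fun u : ℝ => exp (d * u - z * cosh u) := by
  refine ((integrable_exp_neg_mul_sq (by positivity : 0 < z / 8)).const_mul
    (exp (2 * d ^ 2 / z))).mono' (by fun_prop) (ae_of_all _ fun u => ?_)
  rw [norm_of_nonneg (exp_nonneg _), ← exp_add]
  refine exp_le_exp.2 ?_
  have amgm : d * u ≤ z * u ^ 2 / 8 + 2 * d ^ 2 / z := by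
    have h : z * u ^ 2 / 8 + 2 * d ^ 2 / z - d * u = (z * u - 4 * d) ^ 2 / (8 * z) := by
      field_simp; ring
    have : 0 ≤ (z * u - 4 * d) ^ 2 / (8 * z) := by positivity
    linarith
  nlinarith [mul_le_mul_of_nonneg_left (sq_div_four_le_cosh u) hz.le]

lemma besselK_nonneg (ν x : ℝ) : 0 ≤ besselK ν x :=
  integral_nonneg fun _ => mul_nonneg (exp_nonneg _) (cosh_pos _).le

lemma integral_exp_mul_sub_mul_cosh {z : ℝ} (hz : 0 < z) (ν : ℝ) :
    ∫ u, exp (ν * u - z * cosh u) = 2 * besselK ν z := by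
  have hsymm : ∫ u, exp (-ν * u - z * cosh u) = ∫ u, exp (ν * u - z * cosh u) := by
    rw [← integral_neg_eq_self]
    simp only [cosh_neg, mul_neg, neg_mul, neg_neg]
  have heven : ∀ u, exp (-z * cosh |u|) * cosh (ν * |u|)
      = (exp (ν * u - z * cosh u) + exp (-ν * u - z * cosh u)) / 2 := by
    intro u
    have hν : cosh (ν * |u|) = cosh (ν * u) := by
      rcases abs_choice u with h | h <;> simp [h]
    rw [cosh_abs, hν, cosh_eq (ν * u), sub_eq_add_neg, sub_eq_add_neg, exp_add, exp_add,
      neg_mul, neg_mul]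
    ring
  rw [besselK, ← integral_comp_abs (f := fun t => exp (-z * cosh t) * cosh (ν * t))]
  simp_rw [heven]
  rw [integral_div, integral_add (integrable_exp_mul_sub_mul_cosh hz ν)
    (integrable_exp_mul_sub_mul_cosh hz (-ν)), hsymm]
  ring

lemma image_const_mul_exp_univ {c : ℝ} (hc : 0 < c) : (fun u => c * exp u) '' univ = Ioi 0 := by
  ext s
  simp only [image_univ, mem_range, mem_Ioi]
  refine ⟨by rintro ⟨u, rfl⟩; positivity, fun hs => ⟨log (s / c), ?_⟩⟩
  rw [exp_log (div_pos hs hc)]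
  field_simp

lemma integrableOn_Ioi_iff_integrable_const_mul_exp_mul_comp {c : ℝ} (hc : 0 < c) (g : ℝ → ℝ) :
    IntegrableOn g (Ioi 0) ↔ Integrable fun u => c * exp u * g (c * exp u) := by
  rw [← image_const_mul_exp_univ hc, integrableOn_image_iff_integrableOn_abs_deriv_smul
    MeasurableSet.univ (fun u _ => ((hasDerivAt_exp u).const_mul c).hasDerivWithinAt)
    (fun u _ v _ h => exp_injective (mul_left_cancel₀ hc.ne' h)), integrableOn_univ]
  simp only [smul_eq_mul, abs_of_pos (mul_pos hc (exp_pos _))]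

lemma integral_Ioi_eq_integral_const_mul_exp_mul_comp {c : ℝ} (hc : 0 < c) (g : ℝ → ℝ) :
    ∫ s in Ioi 0, g s = ∫ u, c * exp u * g (c * exp u) := by
  rw [← image_const_mul_exp_univ hc, integral_image_eq_integral_abs_deriv_smul
    MeasurableSet.univ (fun u _ => ((hasDerivAt_exp u).const_mul c).hasDerivWithinAt)
    (fun u _ v _ h => exp_injective (mul_left_cancel₀ hc.ne' h)), Measure.restrict_univ]
  simp only [smul_eq_mul, abs_of_pos (mul_pos hc (exp_pos _))]

noncomputable def gigKernel (ν c z s : ℝ) : ℝ :=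
  s ^ (ν - 1) * exp (-(z / 2) * (s / c + c / s))

lemma const_mul_exp_mul_gigKernel_const_mul_exp {c : ℝ} (hc : 0 < c) (ν z u : ℝ) :
    c * exp u * gigKernel ν c z (c * exp u) = c ^ ν * exp (ν * u - z * cosh u) := by
  have hs : 0 < c * exp u := by positivity
  have hcosh : c * exp u / c + c / (c * exp u) = 2 * cosh u := by
    rw [cosh_eq, exp_neg]
    field_simp
  have hpow : c * exp u * (c * exp u) ^ (ν - 1) = c ^ ν * exp (ν * u) := by
    rw [mul_comm, ← rpow_add_one hs.ne', sub_add_cancel, mul_rpow hc.le (exp_pos u).le,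
      ← exp_mul, mul_comm u]
  rw [gigKernel, hcosh, ← mul_assoc, hpow, mul_assoc, ← exp_add]
  congr 2
  ring

lemma integrableOn_gigKernel {c z : ℝ} (hc : 0 < c) (hz : 0 < z) (ν : ℝ) :
    IntegrableOn (gigKernel ν c z) (Ioi 0) := by
  rw [integrableOn_Ioi_iff_integrable_const_mul_exp_mul_comp hc]
  simp only [const_mul_exp_mul_gigKernel_const_mul_exp hc]
  exact (integrable_exp_mul_sub_mul_cosh hz ν).const_mul _

lemma integral_gigKernel {c z : ℝ} (hc : 0 < c) (hz : 0 < z) (ν : ℝ) :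
    ∫ s in Ioi 0, gigKernel ν c z s = 2 * c ^ ν * besselK ν z := by
  rw [integral_Ioi_eq_integral_const_mul_exp_mul_comp hc]
  simp only [const_mul_exp_mul_gigKernel_const_mul_exp hc]
  rw [integral_const_mul, integral_exp_mul_sub_mul_cosh hz]
  ring

noncomputable def gaussianGammaJointPDF (k lam μ β x s : ℝ) : ℝ≥0∞ :=
  gaussianPDF (μ + β * s) s.toNNReal x * gammaPDF k lam s

lemma measurable_uncurry_gaussianGammaJointPDF (k lam μ β : ℝ) :
    Measurable (Function.uncurry (gaussianGammaJointPDF k lam μ β)) :=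
  (measurable_uncurry_gaussianPDF.comp
    (by fun_prop : Measurable fun p : ℝ × ℝ => (μ + β * p.2, p.2.toNNReal, p.1))).mul
    ((measurable_gammaPDFReal k lam).ennreal_ofReal.comp measurable_snd)

lemma lintegral_gaussianGammaJointPDF_left (k lam μ β : ℝ) {s : ℝ} (hs : s ≠ 0) :
    ∫⁻ x, gaussianGammaJointPDF k lam μ β x s = gammaPDF k lam s := by
  rcases hs.lt_or_gt with hs | hs
  · simp [gaussianGammaJointPDF, gammaPDF_of_neg hs]
  · simp only [gaussianGammaJointPDF]
    rw [lintegral_mul_const _ (measurable_gaussianPDF _ _),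
      lintegral_gaussianPDF_eq_one _ (by simpa using hs), one_mul]

lemma lintegral_lintegral_gaussianGammaJointPDF {k lam : ℝ} (hk : 0 < k) (hlam : 0 < lam)
    (μ β : ℝ) : ∫⁻ x, ∫⁻ s, gaussianGammaJointPDF k lam μ β x s = 1 := by
  rw [lintegral_lintegral_swap (measurable_uncurry_gaussianGammaJointPDF k lam μ β).aemeasurable,
    lintegral_congr_ae ((Measure.ae_ne volume 0).mono
      fun s hs => lintegral_gaussianGammaJointPDF_left k lam μ β hs),
    lintegral_gammaPDF_eq_one hk hlam]

lemma gaussianPDFReal_mul_gammaPDFReal_eq_mul_gigKernel {ν α β μ x s : ℝ} (hα : 0 < α)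
    (hx : x ≠ μ) (hs : 0 < s) :
    gaussianPDFReal (μ + β * s) s.toNNReal x * gammaPDFReal (ν + 1 / 2) ((α ^ 2 - β ^ 2) / 2) s
      = ((α ^ 2 - β ^ 2) / 2) ^ (ν + 1 / 2) / (√(2 * π) * Gamma (ν + 1 / 2)) *
          exp (β * (x - μ)) * gigKernel ν (|x - μ| / α) (α * |x - μ|) s := by
  have hy : 0 < |x - μ| := abs_pos.2 (sub_ne_zero.2 hx)
  have hsqrt : √(2 * π * s) = √(2 * π) * √s := sqrt_mul (by positivity) s
  have hpow : s ^ (ν + 1 / 2 - 1) = s ^ (ν - 1) * √s := by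
    rw [show ν + 1 / 2 - 1 = (ν - 1) + 1 / 2 by ring, rpow_add hs, sqrt_eq_rpow]
  have hexp : -(x - (μ + β * s)) ^ 2 / (2 * s) + -((α ^ 2 - β ^ 2) / 2 * s)
      = β * (x - μ) + -(α * |x - μ| / 2) * (s / (|x - μ| / α) + |x - μ| / α / s) := by
    field_simp
    rw [sq_abs]
    ring
  simp only [gaussianPDFReal, gammaPDFReal, if_pos hs.le, Real.coe_toNNReal _ hs.le, gigKernel,
    hsqrt, hpow]
  have hE : exp (-(x - (μ + β * s)) ^ 2 / (2 * s)) * exp (-((α ^ 2 - β ^ 2) / 2 * s))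
      = exp (β * (x - μ)) * exp (-(α * |x - μ| / 2) * (s / (|x - μ| / α) + |x - μ| / α / s)) := by
    rw [← exp_add, ← exp_add, hexp]
  have hsqrt_ne : √s ≠ 0 := (sqrt_pos.2 hs).ne'
  rw [div_mul_eq_div_div_swap _ (√(2 * π)) (Gamma _)]
  generalize ((α ^ 2 - β ^ 2) / 2) ^ (ν + 1 / 2) / Gamma (ν + 1 / 2) = K
  calc _ = K / √(2 * π) * (exp (-(x - (μ + β * s)) ^ 2 / (2 * s)) *
        exp (-((α ^ 2 - β ^ 2) / 2 * s))) * s ^ (ν - 1) * (√s * (√s)⁻¹) := by ring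
    _ = _ := by rw [hE, mul_inv_cancel₀ hsqrt_ne]; ring

lemma vg2pdf_eq_mul_integral_gigKernel {ν α β μ x : ℝ} (hα : 0 < α) (hβα : β ^ 2 ≤ α ^ 2)
    (hx : x ≠ μ) :
    vg2pdf ν α β μ x = ((α ^ 2 - β ^ 2) / 2) ^ (ν + 1 / 2) / (√(2 * π) * Gamma (ν + 1 / 2)) *
      exp (β * (x - μ)) * ∫ s in Ioi 0, gigKernel ν (|x - μ| / α) (α * |x - μ|) s := by
  have hy : 0 < |x - μ| := abs_pos.2 (sub_ne_zero.2 hx)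
  rw [integral_gigKernel (by positivity) (by positivity)]
  have h2 : (2 : ℝ) ^ (ν + 1 / 2) = 2 ^ ν * √2 := by rw [rpow_add two_pos, ← sqrt_eq_rpow]
  have h2π : √(2 * π) = √2 * √π := sqrt_mul zero_le_two π
  have hν : (|x - μ| / (2 * α)) ^ ν = (|x - μ| / α) ^ ν / 2 ^ ν := by
    rw [mul_comm, ← div_div, div_rpow (by positivity) zero_le_two]
  rw [vg2pdf, div_rpow (sub_nonneg.2 hβα) zero_le_two, h2, h2π, hν]
  have : (0 : ℝ) < 2 ^ ν := rpow_pos_of_pos two_pos ν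
  field_simp
  rw [sq_sqrt zero_le_two]
  ring

lemma lintegral_gaussianGammaJointPDF_right {ν α β μ x : ℝ} (hν : -1 / 2 < ν) (hαβ : |β| < α)
    (hx : x ≠ μ) :
    ∫⁻ s, gaussianGammaJointPDF (ν + 1 / 2) ((α ^ 2 - β ^ 2) / 2) μ β x s
      = ENNReal.ofReal (vg2pdf ν α β μ x) := by
  have hα : 0 < α := (abs_nonneg β).trans_lt hαβ
  have hβα : β ^ 2 < α ^ 2 := sq_lt_sq' (neg_lt_of_abs_lt hαβ) (lt_of_abs_lt hαβ)
  have hy : 0 < |x - μ| := abs_pos.2 (sub_ne_zero.2 hx)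
  set C := ((α ^ 2 - β ^ 2) / 2) ^ (ν + 1 / 2) / (√(2 * π) * Gamma (ν + 1 / 2)) *
    exp (β * (x - μ))
  have hC : 0 ≤ C := mul_nonneg (div_nonneg (rpow_nonneg (by linarith) _)
    (mul_nonneg (sqrt_nonneg _) (Gamma_pos_of_pos (by linarith)).le)) (exp_nonneg _)
  have hIic : ∀ s ∈ Iic (0 : ℝ), gaussianGammaJointPDF (ν + 1 / 2) ((α ^ 2 - β ^ 2) / 2) μ β x s
      = 0 := fun s hs => by
    simp [gaussianGammaJointPDF, Real.toNNReal_of_nonpos hs, gaussianPDF_zero_var]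
  have hIoi : ∀ s ∈ Ioi (0 : ℝ), gaussianGammaJointPDF (ν + 1 / 2) ((α ^ 2 - β ^ 2) / 2) μ β x s
      = ENNReal.ofReal (C * gigKernel ν (|x - μ| / α) (α * |x - μ|) s) := fun s hs => by
    rw [gaussianGammaJointPDF, gaussianPDF, gammaPDF, ← ENNReal.ofReal_mul
      (gaussianPDFReal_nonneg _ _ _), gaussianPDFReal_mul_gammaPDFReal_eq_mul_gigKernel hα hx hs]
  have hnonneg : 0 ≤ᵐ[volume.restrict (Ioi 0)]
      fun s => C * gigKernel ν (|x - μ| / α) (α * |x - μ|) s :=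
    (ae_restrict_iff' measurableSet_Ioi).2 (ae_of_all _ fun s hs =>
      mul_nonneg hC (mul_nonneg (rpow_nonneg (le_of_lt hs) _) (exp_nonneg _)))
  rw [← lintegral_add_compl _ measurableSet_Ioi, compl_Ioi,
    setLIntegral_congr_fun measurableSet_Iic hIic, lintegral_zero, add_zero,
    setLIntegral_congr_fun measurableSet_Ioi hIoi, ← ofReal_integral_eq_lintegral_ofReal
      ((integrableOn_gigKernel (by positivity) (by positivity) ν).const_mul C) hnonneg,
    integral_const_mul, vg2pdf_eq_mul_integral_gigKernel hα hβα.le hx]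

lemma vg2pdf_nonneg {ν α β : ℝ} (hν : -1 / 2 ≤ ν) (hαβ : |β| ≤ α) (μ x : ℝ) :
    0 ≤ vg2pdf ν α β μ x := by
  have hα : 0 ≤ α := (abs_nonneg β).trans hαβ
  have hβα : β ^ 2 ≤ α ^ 2 := sq_le_sq' (neg_le_of_abs_le hαβ) (le_of_abs_le hαβ)
  have hΓ : 0 ≤ Gamma (ν + 1 / 2) := Gamma_nonneg_of_nonneg (by linarith)
  unfold vg2pdf
  have := rpow_nonneg (sub_nonneg.2 hβα) (ν + 1 / 2)
  have := besselK_nonneg ν (α * |x - μ|)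
  positivity

lemma integral_eq_toReal_lintegral_lintegral {X Y : Type*} [MeasurableSpace X]
    [MeasurableSpace Y] {μ : Measure X} {ν : Measure Y} [SFinite ν] {f : X → ℝ}
    {F : X → Y → ℝ≥0∞} (hF : Measurable (Function.uncurry F)) (hf_nonneg : 0 ≤ᵐ[μ] f)
    (hf : ∀ᵐ x ∂μ, ENNReal.ofReal (f x) = ∫⁻ y, F x y ∂ν) :
    ∫ x, f x ∂μ = (∫⁻ x, ∫⁻ y, F x y ∂ν ∂μ).toReal := by
  have hfin : ∀ᵐ x ∂μ, ∫⁻ y, F x y ∂ν < ∞ := hf.mono fun x hx => hx ▸ ENNReal.ofReal_lt_top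
  rw [← integral_toReal hF.lintegral_prod_right.aemeasurable hfin]
  refine integral_congr_ae ?_
  filter_upwards [hf_nonneg, hf] with x h0 hx
  rw [← hx, ENNReal.toReal_ofReal h0]

theorem stmt6 (ν α β μ : ℝ) (hν : -1/2 < ν) (hαβ : |β| < α) :
    (∀ x, 0 ≤ vg2pdf ν α β μ x) ∧ ∫ x, vg2pdf ν α β μ x = 1 := by
  have hnonneg : ∀ x, 0 ≤ vg2pdf ν α β μ x := vg2pdf_nonneg hν.le hαβ.le μ
  have hk : 0 < ν + 1 / 2 := by linarith
  have hlam : 0 < (α ^ 2 - β ^ 2) / 2 := by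
    have := sq_lt_sq' (neg_lt_of_abs_lt hαβ) (lt_of_abs_lt hαβ)
    linarith
  refine ⟨hnonneg, ?_⟩
  rw [integral_eq_toReal_lintegral_lintegral (measurable_uncurry_gaussianGammaJointPDF _ _ μ β)
    (ae_of_all _ hnonneg) ((Measure.ae_ne volume μ).mono fun x hx =>
      (lintegral_gaussianGammaJointPDF_right hν hαβ hx).symm),
    lintegral_lintegral_gaussianGammaJointPDF hk hlam, ENNReal.toReal_one]
end

section
/- Let U ~ N(0,1) and V ~ Γ(r/2, 1/2) be independent, with r > 0, θ ∈ ℝ, σ > 0, μ ∈ ℝ. Then the random variable μ + θV + σ√V · U has the Variance-Gamma distribution VG₁(r, θ, σ, μ). -/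
/-! Conditionally on `V = v`, `μ + θ V + σ √V U` is `N(μ + θ v, σ² v)`, so its law has density
`x ↦ ∫ γ(v) φ_{μ+θv, σ²v}(x) dv`, with `γ` the `Γ(r/2, 1/2)` density. For `x ≠ μ` the integrand
is a constant times `v ^ (ν - 1) * exp (-(y / 2) * (v / c + c / v))`, where `ν = (r - 1) / 2`,
`y = √(θ² + σ²) |x - μ| / σ²` and `c = |x - μ| / √(θ² + σ²)`; the substitution `v = c eᵗ`
turns this into `2 c^ν K_ν(y)` via `K_ν(y) = ∫₀^∞ e^{-y cosh t} cosh (ν t) dt`. -/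


open MeasureTheory ProbabilityTheory

open Real Set
open scoped ENNReal NNReal

lemma lintegral_Iio_eq_lintegral_Ioi_neg (g : ℝ → ℝ≥0∞) :
    ∫⁻ t in Iio 0, g t = ∫⁻ t in Ioi 0, g (-t) := by
  simpa using lintegral_image_eq_lintegral_abs_deriv_mul (measurableSet_Ioi (a := (0 : ℝ)))
    (fun t _ => (hasDerivAt_neg t).hasDerivWithinAt) neg_injective.injOn g

lemma range_const_mul_exp {c : ℝ} (hc : 0 < c) : range (fun t => c * exp t) = Ioi 0 := by
  rw [← Function.comp_def (c * ·) exp, range_comp, range_exp, image_mul_left_Ioi hc, mul_zero]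

lemma lintegral_Ioi_eq_lintegral_const_mul_exp {c : ℝ} (hc : 0 < c) (g : ℝ → ℝ≥0∞) :
    ∫⁻ v in Ioi 0, g v = ∫⁻ t, ENNReal.ofReal (c * exp t) * g (c * exp t) := by
  have := lintegral_image_eq_lintegral_abs_deriv_mul MeasurableSet.univ
    (fun t _ => ((hasDerivAt_exp t).const_mul c).hasDerivWithinAt)
    (fun _ _ _ _ h => exp_injective (mul_left_cancel₀ hc.ne' h)) g
  simpa [image_univ, range_const_mul_exp hc, abs_of_pos, hc] using this

noncomputable def besselKLintegral (ν x : ℝ) : ℝ≥0∞ :=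
  ∫⁻ t in Ioi 0, ENNReal.ofReal (exp (-x * cosh t) * cosh (ν * t))

lemma ofReal_besselK {ν x : ℝ} (h : besselKLintegral ν x ≠ ∞) :
    ENNReal.ofReal (besselK ν x) = besselKLintegral ν x := by
  rw [besselK, integral_eq_lintegral_of_nonneg_ae
    (ae_of_all _ fun t => by positivity) (by fun_prop : Continuous _).aestronglyMeasurable]
  exact ENNReal.ofReal_toReal h

lemma lintegral_exp_mul_mul_exp_neg_mul_cosh (ν x : ℝ) :
    ∫⁻ t, ENNReal.ofReal (exp (ν * t) * exp (-x * cosh t)) = 2 * besselKLintegral ν x := by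
  have hsymm (t : ℝ) : ENNReal.ofReal (exp (ν * -t) * exp (-x * cosh (-t))) +
      ENNReal.ofReal (exp (ν * t) * exp (-x * cosh t)) =
      2 * ENNReal.ofReal (exp (-x * cosh t) * cosh (ν * t)) := by
    rw [← ENNReal.ofReal_add (by positivity) (by positivity), ← ENNReal.ofReal_ofNat 2,
      ← ENNReal.ofReal_mul zero_le_two, cosh_neg, cosh_eq (ν * t), mul_neg]
    ring_nf
  rw [← lintegral_add_compl _ measurableSet_Iio, compl_Iio, ← setLIntegral_congr Ioi_ae_eq_Ici,
    lintegral_Iio_eq_lintegral_Ioi_neg, ← lintegral_add_left (by fun_prop)]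
  simp_rw [hsymm]
  exact lintegral_const_mul' _ _ (by norm_num)

-- The substitution `v = c * exp t` turns `v / c + c / v` into `2 * cosh t`.
lemma lintegral_rpow_mul_exp_neg_mul_add_div_eq_besselK (ν x : ℝ) {c : ℝ} (hc : 0 < c) :
    ∫⁻ v in Ioi 0, ENNReal.ofReal (v ^ (ν - 1) * exp (-(x / 2) * (v / c + c / v))) =
      ENNReal.ofReal (c ^ ν) * (2 * besselKLintegral ν x) := by
  have hsubst (t : ℝ) : ENNReal.ofReal (c * exp t) *
      ENNReal.ofReal ((c * exp t) ^ (ν - 1) * exp (-(x / 2) * (c * exp t / c + c / (c * exp t)))) =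
      ENNReal.ofReal (c ^ ν) * ENNReal.ofReal (exp (ν * t) * exp (-x * cosh t)) := by
    have hv : 0 < c * exp t := by positivity
    rw [← ENNReal.ofReal_mul hv.le, ← ENNReal.ofReal_mul (by positivity)]
    congr 1
    rw [rpow_sub_one hv.ne', mul_rpow hc.le (exp_pos t).le, ← exp_mul, cosh_eq, exp_neg]
    field_simp
  rw [lintegral_Ioi_eq_lintegral_const_mul_exp hc]
  simp_rw [hsubst]
  rw [lintegral_const_mul' _ _ ENNReal.ofReal_ne_top, lintegral_exp_mul_mul_exp_neg_mul_cosh]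

lemma map_prod_eq_withDensity_lintegral {α β γ : Type*} [MeasurableSpace α] [MeasurableSpace β]
    [MeasurableSpace γ] {μ : Measure α} {ρ : Measure β} {κ : Measure γ} [SFinite μ] [SFinite ρ]
    [SFinite κ] {f : α × β → γ} (hf : Measurable f) {g : β → γ → ℝ≥0∞}
    (hg : Measurable (Function.uncurry g))
    (h : ∀ᵐ v ∂ρ, μ.map (fun u => f (u, v)) = κ.withDensity (g v)) :
    (μ.prod ρ).map f = κ.withDensity fun x => ∫⁻ v, g v x ∂ρ := by
  ext s hs
  rw [Measure.map_apply hf hs, Measure.prod_apply_symm (hf hs), withDensity_apply _ hs,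
    lintegral_lintegral_swap (μ := κ.restrict s) (f := fun x v => g v x)
      (hg.comp measurable_swap).aemeasurable]
  refine lintegral_congr_ae (h.mono fun v hv => ?_)
  dsimp only
  rw [← withDensity_apply _ hs, ← hv]
  exact (Measure.map_apply (hf.comp measurable_prodMk_right) hs).symm

lemma gaussianReal_map_const_add_sqrt_mul (m : ℝ) (v : ℝ≥0) :
    (gaussianReal 0 1).map (fun u => m + √v * u) = gaussianReal m v := by
  rw [← Function.comp_def (m + ·) (√v * ·), ← Measure.map_map (by fun_prop) (by fun_prop),
    gaussianReal_map_const_mul, gaussianReal_map_const_add]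
  congr
  · simp
  · ext; simp

lemma measurable_uncurry_gaussianPDF (θ σ μ : ℝ) :
    Measurable (Function.uncurry fun v x => gaussianPDF (μ + θ * v) (σ ^ 2 * v).toNNReal x) := by
  change Measurable fun p : ℝ × ℝ =>
    ENNReal.ofReal (gaussianPDFReal (μ + θ * p.1) (σ ^ 2 * p.1).toNNReal p.2)
  simp only [gaussianPDFReal, Real.coe_toNNReal']
  fun_prop

noncomputable def normalVarianceMeanMixturePDF (ρ : Measure ℝ) (θ σ μ x : ℝ) : ℝ≥0∞ :=
  ∫⁻ v, gaussianPDF (μ + θ * v) (σ ^ 2 * v).toNNReal x ∂ρ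

lemma map_prod_gaussianReal_eq_withDensity {ρ : Measure ℝ} [SFinite ρ] (hρ : ∀ᵐ v ∂ρ, 0 < v)
    (θ : ℝ) {σ : ℝ} (hσ : 0 < σ) (μ : ℝ) :
    ((gaussianReal 0 1).prod ρ).map (fun p => μ + θ * p.2 + σ * √p.2 * p.1) =
      volume.withDensity (normalVarianceMeanMixturePDF ρ θ σ μ) := by
  refine map_prod_eq_withDensity_lintegral (by fun_prop) (measurable_uncurry_gaussianPDF θ σ μ)
    (hρ.mono fun v hv => ?_)
  have hvar : (σ ^ 2 * v).toNNReal ≠ 0 := by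
    rw [Ne, Real.toNNReal_eq_zero, not_le]; positivity
  have hsqrt : √((σ ^ 2 * v).toNNReal : ℝ) = σ * √v := by
    rw [Real.coe_toNNReal _ (by positivity), sqrt_mul (sq_nonneg σ), sqrt_sq hσ.le]
  rw [← gaussianReal_of_var_ne_zero _ hvar,
    ← gaussianReal_map_const_add_sqrt_mul (μ + θ * v) (σ ^ 2 * v).toNNReal, hsqrt]

lemma ae_gammaMeasure_pos {a r : ℝ} : ∀ᵐ v ∂gammaMeasure a r, 0 < v := by
  have hset : {v : ℝ | ¬ 0 < v} = Iic 0 := by ext; simp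
  rw [ae_iff, hset, gammaMeasure, withDensity_apply _ measurableSet_Iic,
    setLIntegral_congr Iio_ae_eq_Iic.symm]
  exact lintegral_gammaPDF_of_nonpos le_rfl

lemma lintegral_gammaMeasure {a r : ℝ} {f : ℝ → ℝ≥0∞} (hf : Measurable f) :
    ∫⁻ v, f v ∂gammaMeasure a r = ∫⁻ v in Ioi 0, ENNReal.ofReal (gammaPDFReal a r v) * f v := by
  rw [gammaMeasure, lintegral_withDensity_eq_lintegral_mul _
    (by exact (measurable_gammaPDFReal a r).ennreal_ofReal : Measurable (gammaPDF a r)) hf,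
    setLIntegral_congr Ioi_ae_eq_Ici, setLIntegral_eq_of_support_subset]
  · rfl
  refine Function.support_subset_iff'.mpr fun v hv => ?_
  rw [gammaPDFReal, if_neg (by simpa using hv), ENNReal.ofReal_zero, zero_mul]

lemma gammaPDFReal_mul_gaussianPDFReal (r θ : ℝ) {σ μ x v : ℝ} (hσ : 0 < σ) (hx : x ≠ μ)
    (hv : 0 < v) :
    gammaPDFReal (r / 2) (1 / 2) v * gaussianPDFReal (μ + θ * v) (σ ^ 2 * v).toNNReal x =
      (1 / 2) ^ (r / 2) / (Gamma (r / 2) * √(2 * π) * σ) * exp (θ * (x - μ) / σ ^ 2) *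
        (v ^ ((r - 1) / 2 - 1) * exp (-(√(θ ^ 2 + σ ^ 2) * |x - μ| / σ ^ 2 / 2) *
          (v / (|x - μ| / √(θ ^ 2 + σ ^ 2)) + |x - μ| / √(θ ^ 2 + σ ^ 2) / v))) := by
  have hW : 0 < √(θ ^ 2 + σ ^ 2) := sqrt_pos.mpr (by positivity)
  have hd : 0 < |x - μ| := abs_pos.mpr (sub_ne_zero.mpr hx)
  have hW2 : √(θ ^ 2 + σ ^ 2) ^ 2 = θ ^ 2 + σ ^ 2 := sq_sqrt (by positivity)
  have hd2 : |x - μ| ^ 2 = (x - μ) ^ 2 := sq_abs _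
  have hexp : -(1 / 2 * v) + -(x - (μ + θ * v)) ^ 2 / (2 * (σ ^ 2 * v)) =
      θ * (x - μ) / σ ^ 2 + -(√(θ ^ 2 + σ ^ 2) * |x - μ| / σ ^ 2 / 2) *
        (v / (|x - μ| / √(θ ^ 2 + σ ^ 2)) + |x - μ| / √(θ ^ 2 + σ ^ 2) / v) := by
    field_simp
    linear_combination v ^ 2 * hW2 + hd2
  have hpow : v ^ (r / 2 - 1) = v ^ ((r - 1) / 2 - 1) * √v := by
    rw [sqrt_eq_rpow, ← rpow_add hv]
    ring_nf
  have hsqrt : √(2 * π * (σ ^ 2 * v)) = √(2 * π) * σ * √v := by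
    rw [← mul_assoc, sqrt_mul (by positivity), sqrt_mul (by positivity), sqrt_sq hσ.le]
  have hexp' := congrArg exp hexp
  rw [exp_add, exp_add] at hexp'
  have hsv : 0 < √v := sqrt_pos.mpr hv
  rw [gammaPDFReal, if_pos hv.le, gaussianPDFReal, Real.coe_toNNReal _ (by positivity), hpow,
    hsqrt]
  calc _ = (1 / 2) ^ (r / 2) / (Gamma (r / 2) * √(2 * π) * σ) * v ^ ((r - 1) / 2 - 1) *
        (exp (-(1 / 2 * v)) * exp (-(x - (μ + θ * v)) ^ 2 / (2 * (σ ^ 2 * v)))) := by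
        field_simp
    _ = _ := by rw [hexp']; ring

lemma one_half_rpow_sub_one_div_two (r : ℝ) :
    (1 / 2 : ℝ) ^ ((r - 1) / 2) = (1 / 2) ^ (r / 2) * √2 := by
  rw [show (r - 1) / 2 = r / 2 + -(1 / 2) by ring, rpow_add (by norm_num), rpow_neg (by norm_num),
    ← sqrt_eq_rpow, sqrt_div' _ zero_le_two, sqrt_one, inv_div, div_one]

lemma normalVarianceMeanMixturePDF_gammaMeasure {r θ σ μ x : ℝ} (hr : 0 < r) (hσ : 0 < σ)
    (hx : x ≠ μ) (hfin : normalVarianceMeanMixturePDF (gammaMeasure (r / 2) (1 / 2)) θ σ μ x ≠ ∞) :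
    normalVarianceMeanMixturePDF (gammaMeasure (r / 2) (1 / 2)) θ σ μ x =
      ENNReal.ofReal (vg1pdf r θ σ μ x) := by
  set W := √(θ ^ 2 + σ ^ 2)
  set c := |x - μ| / W
  set C := (1 / 2) ^ (r / 2) / (Gamma (r / 2) * √(2 * π) * σ) * exp (θ * (x - μ) / σ ^ 2)
  have hW : 0 < W := sqrt_pos.mpr (by positivity)
  have hc : 0 < c := div_pos (abs_pos.mpr (sub_ne_zero.mpr hx)) hW
  have hC : 0 < C := by have := Gamma_pos_of_pos (half_pos hr); positivity
  have hpt : ∀ v ∈ Ioi (0 : ℝ), ENNReal.ofReal (gammaPDFReal (r / 2) (1 / 2) v) *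
      gaussianPDF (μ + θ * v) (σ ^ 2 * v).toNNReal x = ENNReal.ofReal C *
        ENNReal.ofReal (v ^ ((r - 1) / 2 - 1) *
          exp (-(W * |x - μ| / σ ^ 2 / 2) * (v / c + c / v))) := by
    intro v hv
    rw [gaussianPDF, ← ENNReal.ofReal_mul (gammaPDFReal_nonneg (half_pos hr) one_half_pos v),
      gammaPDFReal_mul_gaussianPDFReal r θ hσ hx hv, ENNReal.ofReal_mul hC.le]
  have hmeas : Measurable fun v => gaussianPDF (μ + θ * v) (σ ^ 2 * v).toNNReal x :=
    (measurable_uncurry_gaussianPDF θ σ μ).comp measurable_prodMk_right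
  rw [normalVarianceMeanMixturePDF, lintegral_gammaMeasure hmeas,
    setLIntegral_congr_fun measurableSet_Ioi hpt, lintegral_const_mul' _ _ ENNReal.ofReal_ne_top,
    lintegral_rpow_mul_exp_neg_mul_add_div_eq_besselK _ _ hc] at hfin ⊢
  have hL : besselKLintegral ((r - 1) / 2) (W * |x - μ| / σ ^ 2) ≠ ∞ := by
    intro h
    simp [h, ENNReal.mul_top, hC, rpow_pos_of_pos hc] at hfin
  rw [← ofReal_besselK hL, ← ENNReal.ofReal_ofNat 2, ← ENNReal.ofReal_mul zero_le_two,
    ← ENNReal.ofReal_mul (by positivity), ← ENNReal.ofReal_mul hC.le, vg1pdf]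
  congr 1
  rw [show |x - μ| / (2 * W) = c * (1 / 2) by ring, mul_rpow hc.le one_half_pos.le,
    one_half_rpow_sub_one_div_two]
  simp only [C, W, sqrt_mul zero_le_two π]
  have hsqrt2 : 0 < √2 := by positivity
  field_simp
  rw [sq_sqrt zero_le_two]

theorem stmt8 {Ω : Type*} [MeasureSpace Ω] [IsProbabilityMeasure (ℙ : Measure Ω)]
    (r θ σ μ : ℝ) (hr : 0 < r) (hσ : 0 < σ)
    (U V : Ω → ℝ) (hU : Measurable U) (hV : Measurable V)
    (hUlaw : Measure.map U ℙ = gaussianReal 0 1)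
    (hVlaw : Measure.map V ℙ = gammaMeasure (r / 2) (1 / 2))
    (hind : IndepFun U V ℙ) :
    Measure.map (fun ω => μ + θ * V ω + σ * Real.sqrt (V ω) * U ω) ℙ
      = vg1measure r θ σ μ := by
  have : IsProbabilityMeasure (gammaMeasure (r / 2) (1 / 2)) :=
    isProbabilityMeasure_gammaMeasure (half_pos hr) one_half_pos
  have hUV : Measure.map (fun ω => (U ω, V ω)) ℙ =
      (gaussianReal 0 1).prod (gammaMeasure (r / 2) (1 / 2)) := by
    rw [← hUlaw, ← hVlaw]
    exact (indepFun_iff_map_prod_eq_prod_map_map hU.aemeasurable hV.aemeasurable).mp hind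
  have hlaw : Measure.map (fun ω => μ + θ * V ω + σ * √(V ω) * U ω) ℙ =
      volume.withDensity (normalVarianceMeanMixturePDF (gammaMeasure (r / 2) (1 / 2)) θ σ μ) := by
    rw [← map_prod_gaussianReal_eq_withDensity ae_gammaMeasure_pos θ hσ μ, ← hUV,
      Measure.map_map (by fun_prop) (by fun_prop)]
    rfl
  -- The Bessel integral is never shown finite directly: finiteness comes from this total mass.
  have hmass : ∫⁻ x, normalVarianceMeanMixturePDF (gammaMeasure (r / 2) (1 / 2)) θ σ μ x ≠ ∞ := by
    have hprob := Measure.isProbabilityMeasure_map (μ := ℙ)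
      (f := fun ω => μ + θ * V ω + σ * √(V ω) * U ω) (by fun_prop)
    rw [hlaw] at hprob
    simpa [withDensity_apply] using hprob.measure_univ.trans_ne ENNReal.one_ne_top
  rw [hlaw, vg1measure]
  refine withDensity_congr_ae ?_
  filter_upwards [ae_lt_top (measurable_uncurry_gaussianPDF θ σ μ).lintegral_prod_left' hmass,
    compl_mem_ae_iff.mpr (measure_singleton μ)] with x hfin hx
  exact normalVarianceMeanMixturePDF_gammaMeasure hr hσ hx hfin.ne
end
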